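/- arXiv:1410.1249 — 2 statements merged into one kernel-verified Lean document; each statement's English description precedes it below -/
import Mathlib

section
/- Let C be the Catalan generating function over ℚ and let T₀ = C·(C ∘ (zC²)), where ∘ denotes composition of formal power series (well-defined since zC² has zero constant term). Then T₀ satisfies the functional equation T₀·(1 − z·(C + T₀)) = 1; equivalently T₀ = 1/(1 − z(C + T₀)). -/
open PowerSeries Finset

/-- The Catalan generating function `C = ∑ Cₙ zⁿ` over `ℚ`. -/
noncomputable def Cgf : PowerSeries ℚ := PowerSeries.mk fun n => (catalan n : ℚ)

/-- Composition `F ∘ a` of formal power series (intended for `a` with zero constant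
term, in which case only the terms with `k ≤ n` contribute to the coefficient of `zⁿ`
in `∑ₖ ([zᵏ]F)·aᵏ`, so the finite sum below is the full composition). -/
noncomputable def PScomp (F a : PowerSeries ℚ) : PowerSeries ℚ :=
  PowerSeries.mk fun n => ∑ k ∈ Finset.range (n + 1),
    PowerSeries.coeff k F * PowerSeries.coeff n (a ^ k)

/-- `T₀ = C·(C ∘ (zC²))`, the generating function for ENT trees with mutator at the root. -/
noncomputable def T₀ : PowerSeries ℚ := Cgf * PScomp Cgf (PowerSeries.X * Cgf ^ 2)

/-
The Catalan series satisfies `C = 1 + zC²`, and composition with a series `a` of zero constant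
term is a ring homomorphism (it agrees with Mathlib's `PowerSeries.subst`), so `D = C ∘ (zC²)`
satisfies `D = 1 + zC²D²`. The functional equation for `T₀ = CD` is then a polynomial identity
in `C` and `D` modulo these two relations.
-/

lemma PScomp_eq_subst (F : PowerSeries ℚ) {a : PowerSeries ℚ} (ha : constantCoeff a = 0) :
    PScomp F a = F.subst a := by
  ext n
  rw [coeff_subst' (HasSubst.of_constantCoeff_zero' ha), PScomp, coeff_mk]
  refine (finsum_eq_sum_of_support_subset _ fun k hk => ?_).symm
  by_contra hkn
  refine hk (mul_eq_zero_of_right _ (coeff_of_lt_order n ?_))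
  exact (Nat.cast_lt.2 (by simpa using hkn)).trans_le (le_order_pow_of_constantCoeff_eq_zero k ha)

lemma Cgf_eq_one_add_X_mul_sq : Cgf = 1 + X * Cgf ^ 2 := by
  have hmap : Cgf = catalanSeries.map (Nat.castRingHom ℚ) := by
    ext n
    simp [Cgf]
  rw [hmap]
  conv_lhs => rw [← catalanSeries_sq_mul_X_add_one]
  simp only [map_add, map_mul, map_pow, map_X, map_one]
  ring

lemma subst_eq_one_add_mul_sq {R : Type*} [CommRing R] {F a : R⟦X⟧} (ha : HasSubst a) (hF : F = 1 + X * F ^ 2) :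
    F.subst a = 1 + a * F.subst a ^ 2 := by
  conv_lhs => rw [hF]
  rw [← coe_substAlgHom ha]
  simp only [map_add, map_one, map_mul, map_pow, coe_substAlgHom, subst_X ha]

/-- `T₀` satisfies the functional equation `T₀·(1 − z(C + T₀)) = 1`. -/
theorem stmt7 : T₀ * (1 - PowerSeries.X * (Cgf + T₀)) = 1 := by
  set D := PScomp Cgf (X * Cgf ^ 2)
  have ha : constantCoeff (X * Cgf ^ 2 : PowerSeries ℚ) = 0 := by simp
  have hC := Cgf_eq_one_add_X_mul_sq
  have hD : D = 1 + X * Cgf ^ 2 * D ^ 2 := by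
    simpa only [D, PScomp_eq_subst _ ha] using
      subst_eq_one_add_mul_sq (HasSubst.of_constantCoeff_zero' ha) hC
  change Cgf * D * (1 - X * (Cgf + Cgf * D)) = 1
  linear_combination D * hC + hD
end

section
/- Let B be the formal power series over ℚ with B = ∑_{n≥0} binom(2n,n) z^n. For every n ≥ 0, the coefficient of z^n in B + 2zB³ equals (n+1)·binom(2n,n); that is, (zB)′ = B + 2zB³ and the total number of vertices over all right path trees with n edges is (n+1)·binom(2n,n). -/
open PowerSeries Finset

/-- The central binomial generating function `B = ∑ binom(2n,n) zⁿ` over `ℚ`. -/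
noncomputable def Bgf : PowerSeries ℚ := PowerSeries.mk fun n => ((2 * n).choose n : ℚ)

/-!
The recurrence `(n+1) c_{n+1} = 2(2n+1) c_n` for `c_n = binom(2n,n)` says `(1 - 4z) B′ = 2B`.
Then `((1 - 4z) B²)′ = 2B ((1 - 4z) B′ - 2B) = 0`, so `(1 - 4z) B² = 1` and
`B′ = B² (1 - 4z) B′ = 2B³`, whence `(zB)′ = B + 2zB³`. Reading off coefficients of `(zB)′`
gives `(n+1) binom(2n,n)`.
-/

theorem PowerSeries.coeff_X_mul_derivative {R : Type*} [CommSemiring R] (f : R⟦X⟧) (n : ℕ) :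
    coeff n (X * d⁄dX R f) = n * coeff n f := by
  cases n with
  | zero => simp
  | succ n => rw [coeff_succ_X_mul, coeff_derivative, mul_comm]; push_cast; ring

lemma coeff_Bgf (n : ℕ) : coeff n Bgf = ((2 * n).choose n : ℚ) := by
  simp [Bgf]

lemma one_sub_four_X_mul_derivative_Bgf : (1 - 4 * X) * d⁄dX ℚ Bgf = 2 * Bgf := by
  ext n
  have hrec : ((n : ℚ) + 1) * (n + 1).centralBinom = 2 * (2 * n + 1) * n.centralBinom :=
    mod_cast Nat.succ_mul_centralBinom_succ n
  rw [sub_mul, one_mul, mul_assoc, map_sub, ← map_ofNat (C (R := ℚ)) 4, coeff_C_mul,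
    ← map_ofNat (C (R := ℚ)) 2, coeff_C_mul, coeff_X_mul_derivative, coeff_derivative]
  simp only [coeff_Bgf, ← Nat.centralBinom_eq_two_mul_choose]
  linear_combination hrec

lemma one_sub_four_X_mul_Bgf_sq : (1 - 4 * X) * Bgf ^ 2 = 1 := by
  apply derivative.ext
  · have h4 : d⁄dX ℚ (4 : ℚ⟦X⟧) = 0 := by rw [← map_ofNat (C (R := ℚ)) 4, derivative_C]
    simp only [Derivation.leibniz, Derivation.leibniz_pow, smul_eq_mul, map_sub, h4,
      derivative_X, Derivation.map_one_eq_zero, nsmul_eq_mul, Nat.cast_ofNat]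
    linear_combination (2 * Bgf) * one_sub_four_X_mul_derivative_Bgf
  · simp [Bgf, map_ofNat]

lemma derivative_Bgf : d⁄dX ℚ Bgf = 2 * Bgf ^ 3 := by
  calc d⁄dX ℚ Bgf = Bgf ^ 2 * ((1 - 4 * X) * d⁄dX ℚ Bgf) := by
        rw [← mul_assoc, mul_comm _ (1 - 4 * X), one_sub_four_X_mul_Bgf_sq, one_mul]
    _ = 2 * Bgf ^ 3 := by rw [one_sub_four_X_mul_derivative_Bgf]; ring

/-- `(zB)′ = B + 2zB³` and `[zⁿ](B + 2zB³) = (n+1)·binom(2n,n)`, the total number of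
vertices over all right path trees with `n` edges. -/
theorem stmt16 :
    d⁄dX ℚ (PowerSeries.X * Bgf) = Bgf + 2 * PowerSeries.X * Bgf ^ 3 ∧
    ∀ n : ℕ, PowerSeries.coeff n (Bgf + 2 * PowerSeries.X * Bgf ^ 3) =
      ((n + 1 : ℕ) : ℚ) * ((2 * n).choose n : ℚ) := by
  have hderiv : d⁄dX ℚ (X * Bgf) = Bgf + 2 * X * Bgf ^ 3 := by
    rw [Derivation.leibniz, smul_eq_mul, smul_eq_mul, derivative_X, derivative_Bgf]
    ring
  refine ⟨hderiv, fun n => ?_⟩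
  rw [← hderiv, coeff_derivative, coeff_succ_X_mul, coeff_Bgf, mul_comm, Nat.cast_succ]
end
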